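/- The map Φ : (ℝ × ℝ) × (ℝ × ℝ) × (ℝ × ℝ) → ℝ⁴ × ℝ⁴ defined by Φ((x_T, y_T), (x_M, z_M), (y_B, z_B)) = ( (1 + (x_T−x_M)² + y_T² + z_M²)^(−1/2) • (1, x_T−x_M, y_T, −z_M), (1 + x_M² + y_B² + (z_M−z_B)²)^(−1/2) • (1, x_M, −y_B, z_M−z_B) ) is injective. -/

import Mathlib

/-!
A positive multiple of a vector with first coordinate `1` determines that vector: the first
coordinate recovers the scalar. So each component of `Φ` determines its affine chart,
`(x_T - x_M, y_T, -z_M)` and `(x_M, -y_B, z_M - z_B)` respectively, and these six numbers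
determine the six coordinates of the argument.
-/

noncomputable def pt (a b c d : ℝ) : EuclideanSpace ℝ (Fin 4) :=
  (WithLp.equiv 2 (Fin 4 → ℝ)).symm ![a, b, c, d]

lemma smul_pt (r a b c d : ℝ) : r • pt a b c d = pt (r * a) (r * b) (r * c) (r * d) := by
  ext i
  fin_cases i <;> rfl

lemma pt_inj {a b c d a' b' c' d' : ℝ} :
    pt a b c d = pt a' b' c' d' ↔ a = a' ∧ b = b' ∧ c = c' ∧ d = d' := by
  refine ⟨fun h => ?_, by rintro ⟨rfl, rfl, rfl, rfl⟩; rfl⟩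
  exact ⟨congrArg (· 0) h, congrArg (· 1) h, congrArg (· 2) h, congrArg (· 3) h⟩

lemma eq_of_smul_pt_one_eq {r s a b c a' b' c' : ℝ} (hr : r ≠ 0)
    (h : r • pt 1 a b c = s • pt 1 a' b' c') : a = a' ∧ b = b' ∧ c = c' := by
  obtain ⟨hrs, ha, hb, hc⟩ := pt_inj.mp (by simpa only [smul_pt] using h)
  rw [mul_one, mul_one] at hrs
  subst hrs
  exact ⟨mul_left_cancel₀ hr ha, mul_left_cancel₀ hr hb, mul_left_cancel₀ hr hc⟩

/-- the explicit local form `Φ` of the Gauss-type map near a triple point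
(the map `L′` in the proof of Lemma 3.5) is injective. -/
theorem gauss_map_local_form_injective :
    Function.Injective (fun p : (ℝ × ℝ) × (ℝ × ℝ) × (ℝ × ℝ) =>
      (((1 + (p.1.1 - p.2.1.1) ^ 2 + p.1.2 ^ 2 + p.2.1.2 ^ 2) ^ (-(1 : ℝ) / 2) •
          pt 1 (p.1.1 - p.2.1.1) p.1.2 (-p.2.1.2),
        (1 + p.2.1.1 ^ 2 + p.2.2.1 ^ 2 + (p.2.1.2 - p.2.2.2) ^ 2) ^ (-(1 : ℝ) / 2) •
          pt 1 p.2.1.1 (-p.2.2.1) (p.2.1.2 - p.2.2.2)) :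
        EuclideanSpace ℝ (Fin 4) × EuclideanSpace ℝ (Fin 4))) := by
  rintro ⟨⟨xT, yT⟩, ⟨xM, zM⟩, ⟨yB, zB⟩⟩ ⟨⟨xT', yT'⟩, ⟨xM', zM'⟩, ⟨yB', zB'⟩⟩ h
  obtain ⟨hTop, hBot⟩ := Prod.mk.inj h
  obtain ⟨hxTM, hyT, hzM⟩ :=
    eq_of_smul_pt_one_eq (Real.rpow_pos_of_pos (by positivity) _).ne' hTop
  obtain ⟨hxM, hyB, hzMB⟩ :=
    eq_of_smul_pt_one_eq (Real.rpow_pos_of_pos (by positivity) _).ne' hBot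
  rw [neg_inj] at hzM hyB
  subst hyT hzM hxM hyB
  obtain rfl : xT = xT' := by linarith
  obtain rfl : zB = zB' := by linarith
  rfl
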